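/- arXiv:1506.06609 — 4 statements merged into one kernel-verified Lean document; each statement's English description precedes it below -/
import Mathlib

section
/- Let α > 0, X a complex Banach space, and T a bounded linear operator on X which is (C,α)-bounded. Then the spectral radius of T satisfies r(T) ≤ 1. -/
open scoped BigOperators

/-- The Cesàro kernel `k^α(n) = α(α+1)⋯(α+n−1)/n!`, with `k^α(0) = 1`. -/
noncomputable def cesaroKernel (α : ℝ) (n : ℕ) : ℝ :=
  (∏ i ∈ Finset.range n, (α + i)) / (Nat.factorial n)

/-- The Cesàro sum of order `α` of an operator `T`:
`Δ^{−α}𝒯(n) = ∑_{j=0}^{n} k^α(n−j) T^j`. -/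
noncomputable def cesaroSum {X : Type*} [NormedAddCommGroup X] [NormedSpace ℂ X]
    (α : ℝ) (T : X →L[ℂ] X) (n : ℕ) : X →L[ℂ] X :=
  ∑ j ∈ Finset.range (n + 1), (cesaroKernel α (n - j) : ℂ) • T ^ j

/-- The Cesàro mean of order `α` of an operator `T`:
`M_T^α(n) = Δ^{−α}𝒯(n) / k^{α+1}(n)`. -/
noncomputable def cesaroMean {X : Type*} [NormedAddCommGroup X] [NormedSpace ℂ X]
    (α : ℝ) (T : X →L[ℂ] X) (n : ℕ) : X →L[ℂ] X :=
  ((cesaroKernel (α + 1) n : ℂ))⁻¹ • cesaroSum α T n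

lemma cesaroKernel_zero' (a : ℝ) : cesaroKernel a 0 = 1 := by
  simp [cesaroKernel]

lemma cesaroKernel_rec (a : ℝ) (i : ℕ) :
    ((i : ℝ) + 1) * cesaroKernel a (i + 1) = (a + i) * cesaroKernel a i := by
  unfold cesaroKernel
  rw [Finset.prod_range_succ, Nat.factorial_succ]
  have h1 : ((Nat.factorial i : ℝ)) ≠ 0 := by positivity
  push_cast
  field_simp

lemma cesaroKernel_pos {a : ℝ} (ha : 0 < a) (n : ℕ) : 0 < cesaroKernel a n := by
  unfold cesaroKernel
  apply div_pos
  · exact Finset.prod_pos fun i _ => by positivity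
  · positivity

lemma cesaroKernel_zero_order (n : ℕ) :
    cesaroKernel 0 n = if n = 0 then 1 else 0 := by
  cases n with
  | zero => simp [cesaroKernel]
  | succ m =>
    simp only [Nat.succ_ne_zero, if_false]
    unfold cesaroKernel
    rw [Finset.prod_eq_zero (Finset.mem_range.mpr (Nat.succ_pos m)) (by norm_num)]
    simp

lemma cesaroKernel_conv (a b : ℝ) (k : ℕ) :
    ∑ i ∈ Finset.range (k + 1), cesaroKernel a i * cesaroKernel b (k - i)
      = cesaroKernel (a + b) k := by
  induction k with
  | zero => simp [cesaroKernel_zero']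
  | succ k ih =>
    have hpos : (0 : ℝ) < (k : ℝ) + 1 := by positivity
    have key : ((k : ℝ) + 1) *
        (∑ i ∈ Finset.range (k + 2), cesaroKernel a i * cesaroKernel b (k + 1 - i))
        = (a + b + k) *
          (∑ i ∈ Finset.range (k + 1), cesaroKernel a i * cesaroKernel b (k - i)) := by
      have split : ∀ i ∈ Finset.range (k + 2),
          ((k : ℝ) + 1) * (cesaroKernel a i * cesaroKernel b (k + 1 - i))
          = ((i : ℝ) * cesaroKernel a i) * cesaroKernel b (k + 1 - i)
            + cesaroKernel a i * ((((k + 1 - i : ℕ)) : ℝ) * cesaroKernel b (k + 1 - i)) := by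
        intro i hi
        have hik : i ≤ k + 1 := Nat.lt_succ_iff.mp (Finset.mem_range.mp hi)
        have : (((k + 1 - i : ℕ)) : ℝ) = (k : ℝ) + 1 - (i : ℝ) := by
          push_cast [Nat.cast_sub hik]; ring
        rw [this]; ring
      rw [Finset.mul_sum, Finset.sum_congr rfl split, Finset.sum_add_distrib]
      have e1 : ∑ i ∈ Finset.range (k + 2),
          ((i : ℝ) * cesaroKernel a i) * cesaroKernel b (k + 1 - i)
          = ∑ i ∈ Finset.range (k + 1), ((a + i) * cesaroKernel a i) * cesaroKernel b (k - i) := by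
        rw [Finset.sum_range_succ']
        simp only [Nat.cast_zero, zero_mul, add_zero]
        refine Finset.sum_congr rfl fun i hi => ?_
        have : ((i : ℝ) + 1) * cesaroKernel a (i + 1) = (a + i) * cesaroKernel a i :=
          cesaroKernel_rec a i
        have hsub : k + 1 - (i + 1) = k - i := by omega
        rw [hsub]
        push_cast
        rw [this]
      have e2 : ∑ i ∈ Finset.range (k + 2),
          cesaroKernel a i * ((((k + 1 - i : ℕ)) : ℝ) * cesaroKernel b (k + 1 - i))
          = ∑ i ∈ Finset.range (k + 1),
            cesaroKernel a i * ((b + ((k - i : ℕ) : ℝ)) * cesaroKernel b (k - i)) := by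
        rw [Finset.sum_range_succ]
        simp only [Nat.sub_self, Nat.cast_zero, zero_mul, mul_zero, add_zero]
        refine Finset.sum_congr rfl fun i hi => ?_
        have hik : i ≤ k := Nat.lt_succ_iff.mp (Finset.mem_range.mp hi)
        have hsub : k + 1 - i = (k - i) + 1 := by omega
        rw [hsub]
        have := cesaroKernel_rec b (k - i)
        push_cast at this ⊢
        rw [this]
      rw [e1, e2, ← Finset.sum_add_distrib, Finset.mul_sum]
      refine Finset.sum_congr rfl fun i hi => ?_
      have hik : i ≤ k := Nat.lt_succ_iff.mp (Finset.mem_range.mp hi)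
      have : ((k - i : ℕ) : ℝ) = (k : ℝ) - (i : ℝ) := by
        push_cast [Nat.cast_sub hik]; ring
      rw [this]; ring
    have rec' := cesaroKernel_rec (a + b) k
    rw [ih] at key
    have : ((k : ℝ) + 1) *
        (∑ i ∈ Finset.range (k + 2), cesaroKernel a i * cesaroKernel b (k + 1 - i))
        = ((k : ℝ) + 1) * cesaroKernel (a + b) (k + 1) := by
      rw [key, rec']
    exact mul_left_cancel₀ (ne_of_gt hpos) this

lemma pow_eq_sum_cesaroSum {X : Type*} [NormedAddCommGroup X] [NormedSpace ℂ X]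
    (α : ℝ) (T : X →L[ℂ] X) (n : ℕ) :
    ∑ j ∈ Finset.range (n + 1), ((cesaroKernel (-α) (n - j) : ℝ) : ℂ) • cesaroSum α T j
      = T ^ n := by
  unfold cesaroSum
  simp only [Finset.smul_sum, smul_smul]
  simp only [Finset.range_eq_Ico]
  rw [← Finset.sum_Ico_Ico_comm]
  have inner : ∀ m ∈ Finset.Ico 0 (n + 1),
      (∑ j ∈ Finset.Ico m (n + 1),
        (((cesaroKernel (-α) (n - j) : ℝ) : ℂ) * ((cesaroKernel α (j - m) : ℝ) : ℂ)) • T ^ m)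
      = ((cesaroKernel 0 (n - m) : ℝ) : ℂ) • T ^ m := by
    intro m hm
    have hmn : m ≤ n := Nat.lt_succ_iff.mp (Finset.mem_Ico.mp hm).2
    rw [← Finset.sum_smul]
    congr 1
    rw [Finset.sum_Ico_eq_sum_range]
    have hlen : n + 1 - m = (n - m) + 1 := by omega
    rw [hlen]
    have : ∀ i ∈ Finset.range ((n - m) + 1),
        (((cesaroKernel (-α) (n - (m + i)) : ℝ) : ℂ) * ((cesaroKernel α ((m + i) - m) : ℝ) : ℂ))
        = ((cesaroKernel α i * cesaroKernel (-α) ((n - m) - i) : ℝ) : ℂ) := by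
      intro i hi
      have h1 : n - (m + i) = (n - m) - i := by omega
      have h2 : (m + i) - m = i := by omega
      rw [h1, h2]
      push_cast
      ring
    rw [Finset.sum_congr rfl this, ← Complex.ofReal_sum]
    rw [cesaroKernel_conv]
    norm_num
  rw [Finset.sum_congr rfl inner]
  rw [Finset.sum_eq_single n]
  · simp [cesaroKernel_zero_order]
  · intro m hm hne
    have : n - m ≠ 0 := by
      have := (Finset.mem_Ico.mp hm).2; omega
    simp [cesaroKernel_zero_order, this]
  · intro h
    exact absurd (Finset.mem_Ico.mpr ⟨Nat.zero_le n, Nat.lt_succ_self n⟩) h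

lemma abs_cesaroKernel_neg_le {a : ℝ} (ha : 0 ≤ a) (n : ℕ) :
    |cesaroKernel (-a) n| ≤ cesaroKernel a n := by
  unfold cesaroKernel
  rw [abs_div, Finset.abs_prod, abs_of_pos (by positivity : (0:ℝ) < (Nat.factorial n : ℝ))]
  apply div_le_div_of_nonneg_right ?_ (by positivity)
  apply Finset.prod_le_prod (fun i _ => abs_nonneg _)
  intro i _
  rw [abs_le]
  constructor
  · have : (0:ℝ) ≤ (i:ℝ) := Nat.cast_nonneg i
    linarith
  · have : (0:ℝ) ≤ (i:ℝ) := Nat.cast_nonneg i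
    linarith

lemma nat_poly_aux (N n : ℕ) : (n + 1 + N) * (n + 1) ^ N ≤ (n + 1) * (n + 2) ^ N := by
  induction N with
  | zero => simp
  | succ N ih =>
    have hp : (n + 1) ^ N ≤ (n + 2) ^ N := Nat.pow_le_pow_left (by omega) N
    calc (n + 1 + (N + 1)) * (n + 1) ^ (N + 1)
        = ((n + 1 + N) * (n + 1) ^ N) * (n + 1) + (n + 1) ^ N * (n + 1) := by ring
      _ ≤ ((n + 1) * (n + 2) ^ N) * (n + 1) + (n + 2) ^ N * (n + 1) := by
          exact Nat.add_le_add (Nat.mul_le_mul_right _ ih) (Nat.mul_le_mul_right _ hp)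
      _ = (n + 1) * (n + 2) ^ (N + 1) := by ring

lemma cesaroKernel_le_pow {a : ℝ} (ha : 0 < a) {N : ℕ} (haN : a ≤ N + 1) (n : ℕ) :
    cesaroKernel a n ≤ ((n : ℝ) + 1) ^ N := by
  induction n with
  | zero => rw [cesaroKernel_zero']; norm_num
  | succ n ih =>
    have hpos : (0:ℝ) < (n : ℝ) + 1 := by positivity
    rw [← mul_le_mul_iff_right₀ hpos, cesaroKernel_rec]
    have h1 : (a + n) * cesaroKernel a n ≤ (a + n) * ((n : ℝ) + 1) ^ N :=
      mul_le_mul_of_nonneg_left ih (by positivity)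
    refine h1.trans ?_
    have h2 : (a + n) * ((n : ℝ) + 1) ^ N ≤ ((n : ℝ) + 1 + N) * ((n : ℝ) + 1) ^ N := by
      apply mul_le_mul_of_nonneg_right (by linarith) (by positivity)
    refine h2.trans ?_
    have h3 := nat_poly_aux N n
    have h3' : ((n : ℝ) + 1 + N) * ((n : ℝ) + 1) ^ N ≤ ((n : ℝ) + 1) * ((n : ℝ) + 2) ^ N := by
      exact_mod_cast h3
    refine h3'.trans ?_
    apply le_of_eq
    push_cast
    ring

/-- **Lemma 1.1.** If `α > 0` and `T` is `(C,α)`-bounded, then the spectral radius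
of `T` satisfies `r(T) ≤ 1`. -/
theorem cesaro_bounded_spectralRadius_le_one
    {X : Type*} [NormedAddCommGroup X] [NormedSpace ℂ X] [CompleteSpace X]
    (α : ℝ) (hα : 0 < α) (T : X →L[ℂ] X)
    (hT : ∃ C : ℝ, ∀ n : ℕ, ‖cesaroMean α T n‖ ≤ C) :
    spectralRadius ℂ T ≤ 1 := by
  obtain ⟨C₀, hC₀⟩ := hT
  set C : ℝ := max C₀ 0 with hCdef
  have hC : 0 ≤ C := le_max_right _ _
  set N : ℕ := ⌈α⌉₊ with hNdef
  have hαN : α ≤ (N : ℝ) + 1 := (Nat.le_ceil α).trans (by linarith)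
  have hα1N : α + 1 ≤ (N : ℝ) + 1 := by
    have := Nat.le_ceil α; linarith
  set P : ℕ := 2 * N + 1 with hPdef
  -- bound on cesaroSum
  have hS : ∀ j : ℕ, ‖cesaroSum α T j‖ ≤ C * cesaroKernel (α + 1) j := by
    intro j
    have hk : (0:ℝ) < cesaroKernel (α + 1) j := cesaroKernel_pos (by linarith) j
    have hkC : ((cesaroKernel (α + 1) j : ℝ) : ℂ) ≠ 0 := by
      exact_mod_cast ne_of_gt hk
    have : cesaroSum α T j = ((cesaroKernel (α + 1) j : ℝ) : ℂ) • cesaroMean α T j := by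
      rw [cesaroMean, smul_inv_smul₀ hkC]
    rw [this]
    refine le_trans (norm_smul_le ((cesaroKernel (α + 1) j : ℝ) : ℂ) (cesaroMean α T j)) ?_
    have hnk : ‖((cesaroKernel (α + 1) j : ℝ) : ℂ)‖ = cesaroKernel (α + 1) j := by
      rw [Complex.norm_real, Real.norm_eq_abs, abs_of_pos hk]
    rw [hnk]
    calc cesaroKernel (α + 1) j * ‖cesaroMean α T j‖
        ≤ cesaroKernel (α + 1) j * C :=
          mul_le_mul_of_nonneg_left ((hC₀ j).trans (le_max_left _ _)) (le_of_lt hk)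
      _ = C * cesaroKernel (α + 1) j := mul_comm _ _
  -- polynomial bound on powers of T
  have hPow : ∀ n : ℕ, ‖T ^ n‖ ≤ C * ((n : ℝ) + 1) ^ P := by
    intro n
    rw [← pow_eq_sum_cesaroSum α T n]
    calc ‖∑ j ∈ Finset.range (n + 1),
            ((cesaroKernel (-α) (n - j) : ℝ) : ℂ) • cesaroSum α T j‖
        ≤ ∑ j ∈ Finset.range (n + 1),
            ‖((cesaroKernel (-α) (n - j) : ℝ) : ℂ) • cesaroSum α T j‖ :=
          norm_sum_le _ _
      _ ≤ ∑ j ∈ Finset.range (n + 1), ((n : ℝ) + 1) ^ N * (C * ((n : ℝ) + 1) ^ N) := by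
          apply Finset.sum_le_sum
          intro j hj
          have hjn : j ≤ n := Nat.lt_succ_iff.mp (Finset.mem_range.mp hj)
          refine le_trans (norm_smul_le ((cesaroKernel (-α) (n - j) : ℝ) : ℂ)
            (cesaroSum α T j)) ?_
          rw [Complex.norm_real, Real.norm_eq_abs]
          have h1 : |cesaroKernel (-α) (n - j)| ≤ ((n : ℝ) + 1) ^ N := by
            refine (abs_cesaroKernel_neg_le (le_of_lt hα) _).trans ?_
            refine (cesaroKernel_le_pow hα hαN _).trans ?_
            apply pow_le_pow_left₀ (by positivity)
            have : ((n - j : ℕ) : ℝ) ≤ (n : ℝ) := by exact_mod_cast Nat.sub_le n j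
            linarith
          have h2 : ‖cesaroSum α T j‖ ≤ C * ((n : ℝ) + 1) ^ N := by
            refine (hS j).trans ?_
            apply mul_le_mul_of_nonneg_left ?_ hC
            refine (cesaroKernel_le_pow (by linarith) hα1N j).trans ?_
            apply pow_le_pow_left₀ (by positivity)
            have : (j : ℝ) ≤ (n : ℝ) := by exact_mod_cast hjn
            linarith
          exact mul_le_mul h1 h2 (norm_nonneg _) (by positivity)
      _ = ((n : ℝ) + 1) * (((n : ℝ) + 1) ^ N * (C * ((n : ℝ) + 1) ^ N)) := by
          rw [Finset.sum_const, Finset.card_range]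
          simp only [nsmul_eq_mul]
          push_cast
          ring
      _ = C * ((n : ℝ) + 1) ^ P := by rw [hPdef]; ring
  -- conclude via the spectral radius formula
  apply ENNReal.le_of_forall_pos_le_add
  intro ε hε _
  set t : ℝ := 1 + (ε : ℝ) with htdef
  have ht : 1 < t := by
    have : (0:ℝ) < (ε : ℝ) := by exact_mod_cast hε
    linarith
  have ht0 : 0 < t := by linarith
  set D : ℝ := C * 2 ^ P with hDdef
  have hD : 0 ≤ D := by positivity
  have htend := tendsto_pow_const_div_const_pow_of_one_lt P ht
  have hev : ∀ᶠ m : ℕ in Filter.atTop, (m : ℝ) ^ P / t ^ m < 1 / (D + 1) :=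
    htend.eventually_lt_const (by positivity)
  obtain ⟨m, hmlt, hm1⟩ := (hev.and (Filter.eventually_ge_atTop 1)).exists
  -- ‖T ^ m‖ ≤ t ^ m
  have hTm : ‖T ^ m‖ ≤ t ^ m := by
    have h1 : ((m : ℝ) + 1) ^ P ≤ 2 ^ P * (m : ℝ) ^ P := by
      rw [← mul_pow]
      apply pow_le_pow_left₀ (by positivity)
      have : (1 : ℝ) ≤ (m : ℝ) := by exact_mod_cast hm1
      linarith
    have h2 : ‖T ^ m‖ ≤ D * (m : ℝ) ^ P := by
      refine (hPow m).trans ?_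
      rw [hDdef, mul_assoc]
      exact mul_le_mul_of_nonneg_left h1 hC
    have htm : (0:ℝ) < t ^ m := by positivity
    have h3 : D * ((m : ℝ) ^ P / t ^ m) ≤ D * (1 / (D + 1)) :=
      mul_le_mul_of_nonneg_left (le_of_lt hmlt) hD
    have h5 : D * ((m : ℝ) ^ P / t ^ m) ≤ 1 := by
      refine h3.trans ?_
      rw [mul_one_div]
      exact div_le_one_of_le₀ (by linarith) (by linarith)
    calc ‖T ^ m‖ ≤ D * (m : ℝ) ^ P := h2
      _ = D * ((m : ℝ) ^ P / t ^ m) * t ^ m := by field_simp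
      _ ≤ 1 * t ^ m := mul_le_mul_of_nonneg_right h5 (le_of_lt htm)
      _ = t ^ m := one_mul _
  obtain ⟨k, rfl⟩ : ∃ k, m = k + 1 := ⟨m - 1, by omega⟩
  set tN : NNReal := 1 + ε with htNdef
  have htNr : ((tN : NNReal) : ℝ) = t := by
    rw [htNdef, htdef]; push_cast; ring
  have hnn : ‖T ^ (k + 1)‖₊ ≤ tN ^ (k + 1) := by
    rw [← NNReal.coe_le_coe]
    rw [coe_nnnorm, NNReal.coe_pow, htNr]
    exact hTm
  have key := spectrum.spectralRadius_le_pow_nnnorm_pow_one_div ℂ T k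
  have f1 : (‖T ^ (k + 1)‖₊ : ENNReal) ^ (1 / ((k : ℝ) + 1)) ≤ (tN : ENNReal) := by
    have hcoe : (‖T ^ (k + 1)‖₊ : ENNReal) ≤ ((tN ^ (k + 1) : NNReal) : ENNReal) := by
      exact_mod_cast hnn
    refine le_trans (ENNReal.rpow_le_rpow hcoe (by positivity)) ?_
    rw [ENNReal.coe_pow, ← ENNReal.rpow_natCast ((tN : ENNReal)) (k + 1),
      ← ENNReal.rpow_mul]
    have hexp : (((k + 1 : ℕ)) : ℝ) * (1 / ((k : ℝ) + 1)) = 1 := by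
      push_cast
      field_simp
    rw [hexp, ENNReal.rpow_one]
  have f2 : (‖(1 : X →L[ℂ] X)‖₊ : ENNReal) ^ (1 / ((k : ℝ) + 1)) ≤ 1 := by
    have h1 : ‖(1 : X →L[ℂ] X)‖ ≤ 1 := by
      rw [ContinuousLinearMap.one_def]
      exact ContinuousLinearMap.norm_id_le
    have h1' : (‖(1 : X →L[ℂ] X)‖₊ : ENNReal) ≤ 1 := by
      exact_mod_cast h1
    calc (‖(1 : X →L[ℂ] X)‖₊ : ENNReal) ^ (1 / ((k : ℝ) + 1))
        ≤ (1 : ENNReal) ^ (1 / ((k : ℝ) + 1)) :=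
          ENNReal.rpow_le_rpow h1' (by positivity)
      _ = 1 := ENNReal.one_rpow _
  calc spectralRadius ℂ T
      ≤ (‖T ^ (k + 1)‖₊ : ENNReal) ^ (1 / ((k : ℝ) + 1)) *
        (‖(1 : X →L[ℂ] X)‖₊ : ENNReal) ^ (1 / ((k : ℝ) + 1)) := key
    _ ≤ (tN : ENNReal) * 1 := mul_le_mul' f1 f2
    _ = 1 + (ε : ENNReal) := by
        rw [mul_one, htNdef]
        push_cast
        rfl
end

section
/- Let f, g : ℤ → ℂ be finitely supported and α > 0. Then (i) W_+^α(f_+ * g_−)(n) = (W_+^α f_+ * g_−)(n) for all n ≥ 0; (ii) W_−^α(f_− * g_+)(n) = (W_−^α f_− * g_+)(n) for all n < 0. -/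
open scoped BigOperators

/-- The Weyl sum `W_+^{−β} f(n) = ∑_{j=n}^{∞} k^β(j−n) f(j)` (as a `tsum`). -/
noncomputable def weylSumPlus (β : ℝ) (f : ℤ → ℂ) (n : ℤ) : ℂ :=
  ∑' j : ℤ, if n ≤ j then (cesaroKernel β (j - n).toNat : ℂ) * f j else 0

/-- The Weyl sum `W_−^{−β} f(n) = ∑_{j=−∞}^{n} k^β(n−j) f(j)` (as a `tsum`). -/
noncomputable def weylSumMinus (β : ℝ) (f : ℤ → ℂ) (n : ℤ) : ℂ :=
  ∑' j : ℤ, if j ≤ n then (cesaroKernel β (n - j).toNat : ℂ) * f j else 0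

/-- The Weyl difference `W_+^α f(n)`.  For `α > 0` it is
`(−1)^m Δ^m (W_+^{−(m−α)} f)(n)` with `m = ⌊α⌋ + 1`; `W_+^0 f = f`
(so is the `α ≤ 0` branch, since `k^0(0) = 1` and `k^0(n) = 0` for `n ≥ 1`),
and for `α < 0` it is the Weyl sum of order `−α`. -/
noncomputable def weylPlus (α : ℝ) (f : ℤ → ℂ) (n : ℤ) : ℂ :=
  if α ≤ 0 then weylSumPlus (-α) f n
  else ∑ j ∈ Finset.range (⌊α⌋₊ + 2),
    ((-1 : ℂ) ^ j * (Nat.choose (⌊α⌋₊ + 1) j : ℂ)) * weylSumPlus ((⌊α⌋₊ + 1 : ℝ) - α) f (n + j)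

/-- The Weyl difference `W_−^α f(n)`.  For `α > 0` it is
`∇^m (W_−^{−(m−α)} f)(n)` with `m = ⌊α⌋ + 1`; `W_−^0 f = f`,
and for `α < 0` it is the Weyl sum of order `−α`. -/
noncomputable def weylMinus (α : ℝ) (f : ℤ → ℂ) (n : ℤ) : ℂ :=
  if α ≤ 0 then weylSumMinus (-α) f n
  else ∑ j ∈ Finset.range (⌊α⌋₊ + 2),
    ((-1 : ℂ) ^ j * (Nat.choose (⌊α⌋₊ + 1) j : ℂ)) * weylSumMinus ((⌊α⌋₊ + 1 : ℝ) - α) f (n - j)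

/-- `W^α f(n) = W_+^α f(n)` for `n ≥ 0` and `W_−^α f(n)` for `n < 0`. -/
noncomputable def weyl (α : ℝ) (f : ℤ → ℂ) (n : ℤ) : ℂ :=
  if 0 ≤ n then weylPlus α f n else weylMinus α f n

/-- `f_+(n) = f(n)` for `n ≥ 0`, `0` for `n < 0`. -/
def fplus (f : ℤ → ℂ) (n : ℤ) : ℂ := if 0 ≤ n then f n else 0

/-- `f_−(n) = f(n)` for `n < 0`, `0` for `n ≥ 0`. -/
def fminus (f : ℤ → ℂ) (n : ℤ) : ℂ := if n < 0 then f n else 0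

/-- Convolution of sequences on `ℤ`: `(f*g)(n) = ∑_{j∈ℤ} f(n−j) g(j)`. -/
noncomputable def zconv (f g : ℤ → ℂ) (n : ℤ) : ℂ := ∑' j : ℤ, f (n - j) * g j

/- ### Auxiliary lemmas -/

lemma summable_mul_right_of_support_finite {G : ℤ → ℂ}
    (hG : (Function.support G).Finite) (A : ℤ → ℂ) :
    Summable (fun m => A m * G m) := by
  apply summable_of_finite_support
  apply hG.subset
  intro m hm
  simp only [Function.mem_support] at hm ⊢
  intro h0
  simp [h0] at hm

lemma weylSumPlus_shift (β : ℝ) (F : ℤ → ℂ) (n m : ℤ) :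
    weylSumPlus β F (n - m)
      = ∑' j : ℤ, if n ≤ j then (cesaroKernel β (j - n).toNat : ℂ) * F (j - m) else 0 := by
  unfold weylSumPlus
  rw [← (Equiv.subRight m).tsum_eq]
  refine (tsum_congr fun j => ?_).symm
  simp only [Equiv.subRight_apply]
  by_cases hnj : n ≤ j
  · rw [if_pos hnj, if_pos (by omega)]
    have h2 : j - m - (n - m) = j - n := by ring
    rw [h2]
  · rw [if_neg hnj, if_neg (by omega)]

lemma weylSumMinus_shift (β : ℝ) (F : ℤ → ℂ) (n m : ℤ) :
    weylSumMinus β F (n - m)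
      = ∑' j : ℤ, if j ≤ n then (cesaroKernel β (n - j).toNat : ℂ) * F (j - m) else 0 := by
  unfold weylSumMinus
  rw [← (Equiv.subRight m).tsum_eq]
  refine (tsum_congr fun j => ?_).symm
  simp only [Equiv.subRight_apply]
  by_cases hnj : j ≤ n
  · rw [if_pos hnj, if_pos (by omega)]
    have h2 : n - m - (j - m) = n - j := by ring
    rw [h2]
  · rw [if_neg hnj, if_neg (by omega)]

lemma summable_kernel_shift {F : ℤ → ℂ} (hF : (Function.support F).Finite)
    (c : ℤ → ℂ) (P : ℤ → Prop) [DecidablePred P] (m : ℤ) :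
    Summable (fun j : ℤ => if P j then c j * F (j - m) else 0) := by
  apply summable_of_finite_support
  apply (hF.image (· + m)).subset
  intro j hj
  simp only [Function.mem_support] at hj
  have hF' : F (j - m) ≠ 0 := by
    intro h0
    by_cases hnj : P j <;> simp [hnj, h0] at hj
  exact ⟨j - m, hF', by simp⟩

lemma summable_uncurry_kernel {F G : ℤ → ℂ} (hF : (Function.support F).Finite)
    (hG : (Function.support G).Finite) (c : ℤ → ℂ) (P : ℤ → Prop) [DecidablePred P] :
    Summable (Function.uncurry fun m j =>
      (if P j then c j * F (j - m) else 0) * G m) := by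
  apply summable_of_finite_support
  apply ((hG.prod hF).image (fun p : ℤ × ℤ => (p.1, p.2 + p.1))).subset
  rintro ⟨m, j⟩ h
  simp only [Function.uncurry, Function.mem_support] at h
  have hG' : G m ≠ 0 := fun h0 => h (by simp [h0])
  have hF' : F (j - m) ≠ 0 := by
    intro h0
    by_cases hnj : P j <;> simp [hnj, h0] at h
  exact ⟨(m, j - m), ⟨hG', hF'⟩, by simp⟩

lemma weylSumPlus_zconv (β : ℝ) (F G : ℤ → ℂ) (hF : (Function.support F).Finite)
    (hG : (Function.support G).Finite) (n : ℤ) :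
    weylSumPlus β (zconv F G) n = zconv (weylSumPlus β F) G n := by
  have key := summable_uncurry_kernel hF hG
    (fun j => (cesaroKernel β (j - n).toNat : ℂ)) (fun j => n ≤ j)
  calc weylSumPlus β (zconv F G) n
      = ∑' j : ℤ, ∑' m : ℤ,
          (if n ≤ j then (cesaroKernel β (j - n).toNat : ℂ) * F (j - m) else 0) * G m := by
        unfold weylSumPlus zconv
        refine tsum_congr fun j => ?_
        by_cases hnj : n ≤ j
        · rw [if_pos hnj, ← tsum_mul_left]
          refine tsum_congr fun m => ?_
          rw [if_pos hnj]
          ring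
        · simp [hnj]
    _ = ∑' m : ℤ, ∑' j : ℤ,
          (if n ≤ j then (cesaroKernel β (j - n).toNat : ℂ) * F (j - m) else 0) * G m :=
        Summable.tsum_comm key
    _ = ∑' m : ℤ, weylSumPlus β F (n - m) * G m := by
        refine tsum_congr fun m => ?_
        rw [(summable_kernel_shift hF _ _ m).tsum_mul_right, ← weylSumPlus_shift]
    _ = zconv (weylSumPlus β F) G n := rfl

lemma weylSumMinus_zconv (β : ℝ) (F G : ℤ → ℂ) (hF : (Function.support F).Finite)
    (hG : (Function.support G).Finite) (n : ℤ) :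
    weylSumMinus β (zconv F G) n = zconv (weylSumMinus β F) G n := by
  have key := summable_uncurry_kernel hF hG
    (fun j => (cesaroKernel β (n - j).toNat : ℂ)) (fun j => j ≤ n)
  calc weylSumMinus β (zconv F G) n
      = ∑' j : ℤ, ∑' m : ℤ,
          (if j ≤ n then (cesaroKernel β (n - j).toNat : ℂ) * F (j - m) else 0) * G m := by
        unfold weylSumMinus zconv
        refine tsum_congr fun j => ?_
        by_cases hnj : j ≤ n
        · rw [if_pos hnj, ← tsum_mul_left]
          refine tsum_congr fun m => ?_
          rw [if_pos hnj]
          ring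
        · simp [hnj]
    _ = ∑' m : ℤ, ∑' j : ℤ,
          (if j ≤ n then (cesaroKernel β (n - j).toNat : ℂ) * F (j - m) else 0) * G m :=
        Summable.tsum_comm key
    _ = ∑' m : ℤ, weylSumMinus β F (n - m) * G m := by
        refine tsum_congr fun m => ?_
        rw [(summable_kernel_shift hF _ _ m).tsum_mul_right, ← weylSumMinus_shift]
    _ = zconv (weylSumMinus β F) G n := rfl

lemma weylPlus_zconv (α : ℝ) (hα : 0 < α) (F G : ℤ → ℂ) (hF : (Function.support F).Finite)
    (hG : (Function.support G).Finite) (n : ℤ) :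
    weylPlus α (zconv F G) n = zconv (weylPlus α F) G n := by
  have hα' : ¬ α ≤ 0 := not_le.2 hα
  set β : ℝ := (⌊α⌋₊ + 1 : ℝ) - α with hβ
  set c : ℕ → ℂ := fun j => (-1 : ℂ) ^ j * (Nat.choose (⌊α⌋₊ + 1) j : ℂ) with hc
  have hW : weylPlus α F = fun k => ∑ j ∈ Finset.range (⌊α⌋₊ + 2),
      c j * weylSumPlus β F (k + j) := by
    funext k
    simp only [weylPlus, if_neg hα']
    rfl
  simp only [weylPlus, if_neg hα', hW]
  calc ∑ j ∈ Finset.range (⌊α⌋₊ + 2), c j * weylSumPlus β (zconv F G) (n + j)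
      = ∑ j ∈ Finset.range (⌊α⌋₊ + 2), ∑' m : ℤ,
          (c j * weylSumPlus β F (n - m + j)) * G m := by
        refine Finset.sum_congr rfl fun j _ => ?_
        rw [weylSumPlus_zconv β F G hF hG]
        unfold zconv
        rw [← tsum_mul_left]
        refine tsum_congr fun m => ?_
        have : n + (j : ℤ) - m = n - m + j := by ring
        rw [this]
        ring
    _ = ∑' m : ℤ, ∑ j ∈ Finset.range (⌊α⌋₊ + 2),
          (c j * weylSumPlus β F (n - m + j)) * G m := by
        refine (Summable.tsum_finsetSum fun j _ => ?_).symm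
        exact summable_mul_right_of_support_finite hG _
    _ = ∑' m : ℤ, (∑ j ∈ Finset.range (⌊α⌋₊ + 2),
          c j * weylSumPlus β F (n - m + j)) * G m := by
        refine tsum_congr fun m => ?_
        rw [Finset.sum_mul]
    _ = zconv (fun k => ∑ j ∈ Finset.range (⌊α⌋₊ + 2),
          c j * weylSumPlus β F (k + j)) G n := rfl

lemma weylMinus_zconv (α : ℝ) (hα : 0 < α) (F G : ℤ → ℂ) (hF : (Function.support F).Finite)
    (hG : (Function.support G).Finite) (n : ℤ) :
    weylMinus α (zconv F G) n = zconv (weylMinus α F) G n := by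
  have hα' : ¬ α ≤ 0 := not_le.2 hα
  set β : ℝ := (⌊α⌋₊ + 1 : ℝ) - α with hβ
  set c : ℕ → ℂ := fun j => (-1 : ℂ) ^ j * (Nat.choose (⌊α⌋₊ + 1) j : ℂ) with hc
  have hW : weylMinus α F = fun k => ∑ j ∈ Finset.range (⌊α⌋₊ + 2),
      c j * weylSumMinus β F (k - j) := by
    funext k
    simp only [weylMinus, if_neg hα']
    rfl
  simp only [weylMinus, if_neg hα', hW]
  calc ∑ j ∈ Finset.range (⌊α⌋₊ + 2), c j * weylSumMinus β (zconv F G) (n - j)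
      = ∑ j ∈ Finset.range (⌊α⌋₊ + 2), ∑' m : ℤ,
          (c j * weylSumMinus β F (n - m - j)) * G m := by
        refine Finset.sum_congr rfl fun j _ => ?_
        rw [weylSumMinus_zconv β F G hF hG]
        unfold zconv
        rw [← tsum_mul_left]
        refine tsum_congr fun m => ?_
        have : n - (j : ℤ) - m = n - m - j := by ring
        rw [this]
        ring
    _ = ∑' m : ℤ, ∑ j ∈ Finset.range (⌊α⌋₊ + 2),
          (c j * weylSumMinus β F (n - m - j)) * G m := by
        refine (Summable.tsum_finsetSum fun j _ => ?_).symm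
        exact summable_mul_right_of_support_finite hG _
    _ = ∑' m : ℤ, (∑ j ∈ Finset.range (⌊α⌋₊ + 2),
          c j * weylSumMinus β F (n - m - j)) * G m := by
        refine tsum_congr fun m => ?_
        rw [Finset.sum_mul]
    _ = zconv (fun k => ∑ j ∈ Finset.range (⌊α⌋₊ + 2),
          c j * weylSumMinus β F (k - j)) G n := rfl

lemma fplus_support_finite {f : ℤ → ℂ} (hf : (Function.support f).Finite) :
    (Function.support (fplus f)).Finite := by
  apply hf.subset
  intro n hn
  simp only [Function.mem_support, fplus] at hn ⊢
  intro h0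
  simp [h0] at hn

lemma fminus_support_finite {f : ℤ → ℂ} (hf : (Function.support f).Finite) :
    (Function.support (fminus f)).Finite := by
  apply hf.subset
  intro n hn
  simp only [Function.mem_support, fminus] at hn ⊢
  intro h0
  simp [h0] at hn

/-- **Lemma 2.8.** For finitely supported `f, g : ℤ → ℂ` and `α > 0`:
(i) `W_+^α(f_+ * g_−)(n) = (W_+^α f_+ * g_−)(n)` for `n ≥ 0`;
(ii) `W_−^α(f_− * g_+)(n) = (W_−^α f_− * g_+)(n)` for `n < 0`. -/
theorem weyl_conv_truncated
    (f g : ℤ → ℂ) (hf : (Function.support f).Finite) (hg : (Function.support g).Finite)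
    (α : ℝ) (hα : 0 < α) :
    (∀ n : ℤ, 0 ≤ n →
      weylPlus α (zconv (fplus f) (fminus g)) n = zconv (weylPlus α (fplus f)) (fminus g) n) ∧
    (∀ n : ℤ, n < 0 →
      weylMinus α (zconv (fminus f) (fplus g)) n = zconv (weylMinus α (fminus f)) (fplus g) n) := by
  constructor
  · intro n _
    exact weylPlus_zconv α hα _ _ (fplus_support_finite hf) (fminus_support_finite hg) n
  · intro n _
    exact weylMinus_zconv α hα _ _ (fminus_support_finite hf) (fplus_support_finite hg) n
end

section
/- Let f, g : ℤ → ℂ be finitely supported and α > 0. Then for n ≥ 0, W^α(f*g)(n) = (W_+^α f_+ * g_−)(n) + W_+^α(f_+ * g_+)(n) + (f_− * W_+^α g_+)(n), and for n < 0, W^α(f*g)(n) = (W_−^α f_− * g_+)(n) + W_−^α(f_− * g_−)(n) + (f_+ * W_−^α g_−)(n). -/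
open scoped BigOperators

open Function

section Gen

variable (P : ℤ → ℤ → Prop) [DecidableRel P] (K : ℤ → ℤ → ℂ)

lemma gen_summable (n : ℤ) (f : ℤ → ℂ) (hf : (support f).Finite) :
    Summable fun j => if P n j then K n j * f j else 0 := by
  apply summable_of_finite_support
  apply hf.subset
  intro j hj
  simp only [mem_support] at hj ⊢
  intro h0
  apply hj
  split_ifs <;> simp [h0]

lemma gen_add (n : ℤ) (f g : ℤ → ℂ) (hf : (support f).Finite) (hg : (support g).Finite) :
    (∑' j : ℤ, if P n j then K n j * (f j + g j) else 0)
      = (∑' j : ℤ, if P n j then K n j * f j else 0)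
        + ∑' j : ℤ, if P n j then K n j * g j else 0 := by
  rw [← Summable.tsum_add (gen_summable P K n f hf) (gen_summable P K n g hg)]
  refine tsum_congr fun j => ?_
  split_ifs with h
  · ring
  · simp

lemma gen_zero (n : ℤ) (f : ℤ → ℂ) (h : ∀ j, P n j → f j = 0) :
    (∑' j : ℤ, if P n j then K n j * f j else 0) = 0 := by
  have : ∀ j : ℤ, (if P n j then K n j * f j else 0) = 0 := by
    intro j
    split_ifs with hp
    · simp [h j hp]
    · rfl
  simp only [this, tsum_zero]

lemma gen_conv (hshift : ∀ n m j : ℤ, P (n - m) (j - m) ↔ P n j)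
    (hK : ∀ n m j : ℤ, K (n - m) (j - m) = K n j)
    (f g : ℤ → ℂ) (hf : (support f).Finite) (hg : (support g).Finite) (n : ℤ) :
    (∑' j : ℤ, if P n j then K n j * zconv f g j else 0)
      = ∑' m : ℤ, (∑' j : ℤ, if P (n - m) j then K (n - m) j * f j else 0) * g m := by
  set F : ℤ → ℤ → ℂ := fun j m => if P n j then K n j * (f (j - m) * g m) else 0 with hF
  have h1 : ∀ j, (if P n j then K n j * zconv f g j else 0) = ∑' m : ℤ, F j m := by
    intro j
    by_cases hp : P n j
    · simp only [hF, if_pos hp, zconv, tsum_mul_left]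
    · simp only [hF, if_neg hp, tsum_zero]
  have hsum : Summable (Function.uncurry F) := by
    apply summable_of_finite_support
    apply Set.Finite.subset ((hf.prod hg).image (fun p => (p.1 + p.2, p.2)))
    rintro ⟨j, m⟩ hjm
    simp only [mem_support, Function.uncurry] at hjm
    have h1' : f (j - m) ≠ 0 := fun h0 => hjm (by simp [hF, h0])
    have h2' : g m ≠ 0 := fun h0 => hjm (by simp [hF, h0])
    exact ⟨(j - m, m), ⟨h1', h2'⟩, by simp⟩
  have h3 : ∀ m, (∑' j : ℤ, F j m)
      = (∑' i : ℤ, if P (n - m) i then K (n - m) i * f i else 0) * g m := by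
    intro m
    rw [← tsum_mul_right,
      ← (Equiv.subRight m).tsum_eq
        (fun i => (if P (n - m) i then K (n - m) i * f i else 0) * g m)]
    refine tsum_congr fun j => ?_
    simp only [Equiv.subRight_apply, hF]
    by_cases hp : P n j
    · rw [if_pos hp, if_pos ((hshift n m j).mpr hp), hK n m j]; ring
    · rw [if_neg hp, if_neg (fun h => hp ((hshift n m j).mp h))]; ring
  calc (∑' j : ℤ, if P n j then K n j * zconv f g j else 0)
      = ∑' (j : ℤ) (m : ℤ), F j m := tsum_congr h1
    _ = ∑' (m : ℤ) (j : ℤ), F j m := (Summable.tsum_comm hsum).symm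
    _ = _ := tsum_congr h3

end Gen

section Inst

lemma zconv_support {f g : ℤ → ℂ} (hf : (support f).Finite) (hg : (support g).Finite) :
    (support (zconv f g)).Finite := by
  apply Set.Finite.subset (hf.image2 (· + ·) hg)
  intro n hn
  simp only [mem_support] at hn
  by_contra hmem
  apply hn
  have : ∀ j : ℤ, f (n - j) * g j = 0 := by
    intro j
    by_contra h0
    exact hmem ⟨n - j, left_ne_zero_of_mul h0, j, right_ne_zero_of_mul h0, by ring⟩
  simp only [zconv, this, tsum_zero]

lemma support_fplus (f : ℤ → ℂ) : (support (fplus f)) ⊆ support f := by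
  intro x hx
  simp only [mem_support, fplus] at hx ⊢
  intro h; apply hx; split_ifs <;> simp [h]

lemma support_fminus (f : ℤ → ℂ) : (support (fminus f)) ⊆ support f := by
  intro x hx
  simp only [mem_support, fminus] at hx ⊢
  intro h; apply hx; split_ifs <;> simp [h]

lemma zconv_comm (f g : ℤ → ℂ) (n : ℤ) : zconv f g n = zconv g f n := by
  unfold zconv
  rw [← (Equiv.subLeft n).tsum_eq (fun j => g (n - j) * f j)]
  refine tsum_congr fun j => ?_
  simp [Equiv.subLeft_apply, mul_comm]

lemma summ_right {F g : ℤ → ℂ} (hg : (support g).Finite) :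
    Summable fun j => F j * g j :=
  summable_of_finite_support (hg.subset fun _ hj => right_ne_zero_of_mul hj)

lemma zconv_add_left (a b g : ℤ → ℂ) (hg : (support g).Finite) (n : ℤ) :
    zconv (fun x => a x + b x) g n = zconv a g n + zconv b g n := by
  unfold zconv
  rw [← Summable.tsum_add (summ_right hg) (summ_right hg)]
  exact tsum_congr fun j => by ring

lemma zconv_add_right (f a b : ℤ → ℂ) (hf : (support f).Finite) (n : ℤ) :
    zconv f (fun x => a x + b x) n = zconv f a n + zconv f b n := by
  rw [zconv_comm, zconv_comm f a, zconv_comm f b]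
  exact zconv_add_left a b f hf n

lemma weylSumPlus_conv (β : ℝ) (f g : ℤ → ℂ) (hf : (support f).Finite)
    (hg : (support g).Finite) (n : ℤ) :
    weylSumPlus β (zconv f g) n = zconv (weylSumPlus β f) g n := by
  have := gen_conv (fun n j => n ≤ j)
    (fun n j => ((cesaroKernel β (j - n).toNat : ℝ) : ℂ))
    (fun n m j => by omega)
    (fun n m j => by rw [show j - m - (n - m) = j - n by ring])
    f g hf hg n
  simpa only [weylSumPlus, zconv] using this

lemma weylSumMinus_conv (β : ℝ) (f g : ℤ → ℂ) (hf : (support f).Finite)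
    (hg : (support g).Finite) (n : ℤ) :
    weylSumMinus β (zconv f g) n = zconv (weylSumMinus β f) g n := by
  have := gen_conv (fun n j => j ≤ n)
    (fun n j => ((cesaroKernel β (n - j).toNat : ℝ) : ℂ))
    (fun n m j => by omega)
    (fun n m j => by show ((cesaroKernel β (n - m - (j - m)).toNat : ℝ) : ℂ) = _; rw [show n - m - (j - m) = n - j by ring])
    f g hf hg n
  simpa only [weylSumMinus, zconv] using this

lemma weylSumPlus_add (β : ℝ) (a b : ℤ → ℂ) (ha : (support a).Finite)
    (hb : (support b).Finite) (n : ℤ) :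
    weylSumPlus β (fun x => a x + b x) n = weylSumPlus β a n + weylSumPlus β b n :=
  gen_add (fun n j => n ≤ j) (fun n j => ((cesaroKernel β (j - n).toNat : ℝ) : ℂ)) n a b ha hb

lemma weylSumMinus_add (β : ℝ) (a b : ℤ → ℂ) (ha : (support a).Finite)
    (hb : (support b).Finite) (n : ℤ) :
    weylSumMinus β (fun x => a x + b x) n = weylSumMinus β a n + weylSumMinus β b n :=
  gen_add (fun n j => j ≤ n) (fun n j => ((cesaroKernel β (n - j).toNat : ℝ) : ℂ)) n a b ha hb

lemma weylSumPlus_zero (β : ℝ) (f : ℤ → ℂ) (n : ℤ) (h : ∀ j, n ≤ j → f j = 0) :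
    weylSumPlus β f n = 0 :=
  gen_zero (fun n j => n ≤ j) (fun n j => ((cesaroKernel β (j - n).toNat : ℝ) : ℂ)) n f h

lemma weylSumMinus_zero (β : ℝ) (f : ℤ → ℂ) (n : ℤ) (h : ∀ j, j ≤ n → f j = 0) :
    weylSumMinus β f n = 0 :=
  gen_zero (fun n j => j ≤ n) (fun n j => ((cesaroKernel β (n - j).toNat : ℝ) : ℂ)) n f h

end Inst

section WP
variable {α : ℝ}

noncomputable def wcoef (α : ℝ) (j : ℕ) : ℂ := (-1 : ℂ) ^ j * ((⌊α⌋₊ + 1).choose j : ℂ)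

lemma weylPlus_eq (hα : 0 < α) (f : ℤ → ℂ) :
    weylPlus α f = fun n => ∑ j ∈ Finset.range (⌊α⌋₊ + 2),
      wcoef α j * weylSumPlus ((⌊α⌋₊ + 1 : ℝ) - α) f (n + j) := by
  funext n
  simp only [weylPlus, if_neg (not_le.mpr hα), wcoef]

lemma weylMinus_eq (hα : 0 < α) (f : ℤ → ℂ) :
    weylMinus α f = fun n => ∑ j ∈ Finset.range (⌊α⌋₊ + 2),
      wcoef α j * weylSumMinus ((⌊α⌋₊ + 1 : ℝ) - α) f (n - j) := by
  funext n
  simp only [weylMinus, if_neg (not_le.mpr hα), wcoef]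

lemma weylPlus_add (hα : 0 < α) (a b : ℤ → ℂ) (ha : (support a).Finite)
    (hb : (support b).Finite) (n : ℤ) :
    weylPlus α (fun x => a x + b x) n = weylPlus α a n + weylPlus α b n := by
  simp only [weylPlus_eq hα]
  rw [← Finset.sum_add_distrib]
  refine Finset.sum_congr rfl fun j _ => ?_
  rw [weylSumPlus_add _ a b ha hb]
  ring

lemma weylMinus_add (hα : 0 < α) (a b : ℤ → ℂ) (ha : (support a).Finite)
    (hb : (support b).Finite) (n : ℤ) :
    weylMinus α (fun x => a x + b x) n = weylMinus α a n + weylMinus α b n := by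
  simp only [weylMinus_eq hα]
  rw [← Finset.sum_add_distrib]
  refine Finset.sum_congr rfl fun j _ => ?_
  rw [weylSumMinus_add _ a b ha hb]
  ring

lemma weylPlus_zero_of (hα : 0 < α) (h : ℤ → ℂ) (hh : ∀ j, 0 ≤ j → h j = 0)
    (n : ℤ) (hn : 0 ≤ n) : weylPlus α h n = 0 := by
  simp only [weylPlus_eq hα]
  refine Finset.sum_eq_zero fun j _ => ?_
  rw [weylSumPlus_zero _ h (n + j) (fun j' hj' => hh j' (by omega))]
  ring

lemma weylMinus_zero_of (hα : 0 < α) (h : ℤ → ℂ) (hh : ∀ j, j < 0 → h j = 0)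
    (n : ℤ) (hn : n < 0) : weylMinus α h n = 0 := by
  simp only [weylMinus_eq hα]
  refine Finset.sum_eq_zero fun j _ => ?_
  rw [weylSumMinus_zero _ h (n - j) (fun j' hj' => hh j' (by omega))]
  ring

lemma weylPlus_conv (hα : 0 < α) (f g : ℤ → ℂ) (hf : (support f).Finite)
    (hg : (support g).Finite) (n : ℤ) :
    weylPlus α (zconv f g) n = zconv (weylPlus α f) g n := by
  simp only [weylPlus_eq hα]
  set β := ((⌊α⌋₊ + 1 : ℝ) - α)
  unfold zconv
  calc (∑ j ∈ Finset.range (⌊α⌋₊ + 2),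
          wcoef α j * weylSumPlus β (fun n => ∑' (j : ℤ), f (n - j) * g j) (n + j))
      = ∑ j ∈ Finset.range (⌊α⌋₊ + 2), ∑' m : ℤ, (wcoef α j * weylSumPlus β f (n - m + j)) * g m := by
        refine Finset.sum_congr rfl fun j _ => ?_
        rw [show (fun n => ∑' (j : ℤ), f (n - j) * g j) = zconv f g from rfl,
          weylSumPlus_conv β f g hf hg (n + j)]
        unfold zconv
        rw [← tsum_mul_left]
        refine tsum_congr fun m => ?_
        rw [show n + (j : ℤ) - m = n - m + j by ring]
        ring
    _ = ∑' m : ℤ, ∑ j ∈ Finset.range (⌊α⌋₊ + 2), (wcoef α j * weylSumPlus β f (n - m + j)) * g m := by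
        refine (Summable.tsum_finsetSum fun j _ => ?_).symm
        exact summ_right hg
    _ = ∑' m : ℤ, (∑ j ∈ Finset.range (⌊α⌋₊ + 2), wcoef α j * weylSumPlus β f (n - m + j)) * g m := by
        refine tsum_congr fun m => ?_
        rw [Finset.sum_mul]

lemma weylMinus_conv (hα : 0 < α) (f g : ℤ → ℂ) (hf : (support f).Finite)
    (hg : (support g).Finite) (n : ℤ) :
    weylMinus α (zconv f g) n = zconv (weylMinus α f) g n := by
  simp only [weylMinus_eq hα]
  set β := ((⌊α⌋₊ + 1 : ℝ) - α)
  unfold zconv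
  calc (∑ j ∈ Finset.range (⌊α⌋₊ + 2),
          wcoef α j * weylSumMinus β (fun n => ∑' (j : ℤ), f (n - j) * g j) (n - j))
      = ∑ j ∈ Finset.range (⌊α⌋₊ + 2), ∑' m : ℤ, (wcoef α j * weylSumMinus β f (n - m - j)) * g m := by
        refine Finset.sum_congr rfl fun j _ => ?_
        rw [show (fun n => ∑' (j : ℤ), f (n - j) * g j) = zconv f g from rfl,
          weylSumMinus_conv β f g hf hg (n - j)]
        unfold zconv
        rw [← tsum_mul_left]
        refine tsum_congr fun m => ?_
        rw [show n - (j : ℤ) - m = n - m - j by ring]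
        ring
    _ = ∑' m : ℤ, ∑ j ∈ Finset.range (⌊α⌋₊ + 2), (wcoef α j * weylSumMinus β f (n - m - j)) * g m := by
        refine (Summable.tsum_finsetSum fun j _ => ?_).symm
        exact summ_right hg
    _ = ∑' m : ℤ, (∑ j ∈ Finset.range (⌊α⌋₊ + 2), wcoef α j * weylSumMinus β f (n - m - j)) * g m := by
        refine tsum_congr fun m => ?_
        rw [Finset.sum_mul]

end WP

section Gen4
variable (P : ℤ → ℤ → Prop) [DecidableRel P] (K : ℤ → ℤ → ℂ)

lemma gen_add4 (n : ℤ) (a b c d : ℤ → ℂ) (ha : (support a).Finite) (hb : (support b).Finite)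
    (hc : (support c).Finite) (hd : (support d).Finite) :
    (∑' j : ℤ, if P n j then K n j * (a j + (b j + (c j + d j))) else 0)
      = (∑' j : ℤ, if P n j then K n j * a j else 0)
        + ((∑' j : ℤ, if P n j then K n j * b j else 0)
          + ((∑' j : ℤ, if P n j then K n j * c j else 0)
            + ∑' j : ℤ, if P n j then K n j * d j else 0)) := by
  rw [← Summable.tsum_add (gen_summable P K n c hc) (gen_summable P K n d hd),
    ← Summable.tsum_add (gen_summable P K n b hb)
      ((gen_summable P K n c hc).add (gen_summable P K n d hd)),
    ← Summable.tsum_add (gen_summable P K n a ha)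
      ((gen_summable P K n b hb).add ((gen_summable P K n c hc).add (gen_summable P K n d hd)))]
  refine tsum_congr fun j => ?_
  split_ifs with h
  · ring
  · simp

end Gen4

section WP4
variable {α : ℝ}

lemma weylSumPlus_add4 (β : ℝ) (a b c d : ℤ → ℂ) (ha : (support a).Finite)
    (hb : (support b).Finite) (hc : (support c).Finite) (hd : (support d).Finite) (n : ℤ) :
    weylSumPlus β (fun x => a x + (b x + (c x + d x))) n
      = weylSumPlus β a n + (weylSumPlus β b n + (weylSumPlus β c n + weylSumPlus β d n)) :=
  gen_add4 (fun n j => n ≤ j) (fun n j => ((cesaroKernel β (j - n).toNat : ℝ) : ℂ))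
    n a b c d ha hb hc hd

lemma weylSumMinus_add4 (β : ℝ) (a b c d : ℤ → ℂ) (ha : (support a).Finite)
    (hb : (support b).Finite) (hc : (support c).Finite) (hd : (support d).Finite) (n : ℤ) :
    weylSumMinus β (fun x => a x + (b x + (c x + d x))) n
      = weylSumMinus β a n + (weylSumMinus β b n + (weylSumMinus β c n + weylSumMinus β d n)) :=
  gen_add4 (fun n j => j ≤ n) (fun n j => ((cesaroKernel β (n - j).toNat : ℝ) : ℂ))
    n a b c d ha hb hc hd

lemma weylPlus_add4 (hα : 0 < α) (a b c d : ℤ → ℂ) (ha : (support a).Finite)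
    (hb : (support b).Finite) (hc : (support c).Finite) (hd : (support d).Finite) (n : ℤ) :
    weylPlus α (fun x => a x + (b x + (c x + d x))) n
      = weylPlus α a n + (weylPlus α b n + (weylPlus α c n + weylPlus α d n)) := by
  simp only [weylPlus_eq hα]
  have h4 := weylSumPlus_add4 ((⌊α⌋₊ + 1 : ℝ) - α) a b c d ha hb hc hd
  simp only [h4, mul_add, Finset.sum_add_distrib]

lemma weylMinus_add4 (hα : 0 < α) (a b c d : ℤ → ℂ) (ha : (support a).Finite)
    (hb : (support b).Finite) (hc : (support c).Finite) (hd : (support d).Finite) (n : ℤ) :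
    weylMinus α (fun x => a x + (b x + (c x + d x))) n
      = weylMinus α a n + (weylMinus α b n + (weylMinus α c n + weylMinus α d n)) := by
  simp only [weylMinus_eq hα]
  have h4 := weylSumMinus_add4 ((⌊α⌋₊ + 1 : ℝ) - α) a b c d ha hb hc hd
  simp only [h4, mul_add, Finset.sum_add_distrib]

end WP4

lemma fdecomp (f : ℤ → ℂ) : ∀ x, f x = fplus f x + fminus f x := by
  intro x
  simp only [fplus, fminus]
  rcases le_or_gt 0 x with h | h
  · rw [if_pos h, if_neg (not_lt.mpr h), add_zero]
  · rw [if_neg (not_le.mpr h), if_pos h, zero_add]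


/-- **Lemma 2.9.** For finitely supported `f, g : ℤ → ℂ` and `α > 0`: for `n ≥ 0`,
`W^α(f*g)(n) = (W_+^α f_+ * g_−)(n) + W_+^α(f_+ * g_+)(n) + (f_− * W_+^α g_+)(n)`,
and for `n < 0`,
`W^α(f*g)(n) = (W_−^α f_− * g_+)(n) + W_−^α(f_− * g_−)(n) + (f_+ * W_−^α g_−)(n)`. -/
theorem weyl_conv_decomposition
    (f g : ℤ → ℂ) (hf : (Function.support f).Finite) (hg : (Function.support g).Finite)
    (α : ℝ) (hα : 0 < α) :
    (∀ n : ℤ, 0 ≤ n →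
      weyl α (zconv f g) n
        = zconv (weylPlus α (fplus f)) (fminus g) n
          + weylPlus α (zconv (fplus f) (fplus g)) n
          + zconv (fminus f) (weylPlus α (fplus g)) n) ∧
    (∀ n : ℤ, n < 0 →
      weyl α (zconv f g) n
        = zconv (weylMinus α (fminus f)) (fplus g) n
          + weylMinus α (zconv (fminus f) (fminus g)) n
          + zconv (fplus f) (weylMinus α (fminus g)) n) := by
  have hfp : (support (fplus f)).Finite := hf.subset (support_fplus f)
  have hfm : (support (fminus f)).Finite := hf.subset (support_fminus f)
  have hgp : (support (fplus g)).Finite := hg.subset (support_fplus g)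
  have hgm : (support (fminus g)).Finite := hg.subset (support_fminus g)
  have hfun : zconv f g = fun x =>
      zconv (fplus f) (fplus g) x + (zconv (fplus f) (fminus g) x
        + (zconv (fminus f) (fplus g) x + zconv (fminus f) (fminus g) x)) := by
    funext x
    have h1 : zconv f g x = zconv (fplus f) g x + zconv (fminus f) g x := by
      conv_lhs => rw [show f = fun t => fplus f t + fminus f t from funext (fdecomp f)]
      exact zconv_add_left _ _ g hg x
    have h2 : zconv (fplus f) g x
        = zconv (fplus f) (fplus g) x + zconv (fplus f) (fminus g) x := by
      conv_lhs => rw [show g = fun t => fplus g t + fminus g t from funext (fdecomp g)]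
      exact zconv_add_right _ _ _ hfp x
    have h3 : zconv (fminus f) g x
        = zconv (fminus f) (fplus g) x + zconv (fminus f) (fminus g) x := by
      conv_lhs => rw [show g = fun t => fplus g t + fminus g t from funext (fdecomp g)]
      exact zconv_add_right _ _ _ hfm x
    rw [h1, h2, h3]; ring
  have hpp : (support (zconv (fplus f) (fplus g))).Finite := zconv_support hfp hgp
  have hpm : (support (zconv (fplus f) (fminus g))).Finite := zconv_support hfp hgm
  have hmp : (support (zconv (fminus f) (fplus g))).Finite := zconv_support hfm hgp
  have hmm : (support (zconv (fminus f) (fminus g))).Finite := zconv_support hfm hgm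
  have hmm0 : ∀ j : ℤ, 0 ≤ j → zconv (fminus f) (fminus g) j = 0 := by
    intro j hj
    have hz : ∀ m : ℤ, fminus f (j - m) * fminus g m = 0 := by
      intro m
      rcases lt_or_ge m 0 with h | h
      · have hnl : ¬ (j - m < 0) := by omega
        simp [fminus, hnl]
      · simp [fminus, not_lt.mpr h]
    simp only [zconv, hz, tsum_zero]
  have hpp0 : ∀ j : ℤ, j < 0 → zconv (fplus f) (fplus g) j = 0 := by
    intro j hj
    have hz : ∀ m : ℤ, fplus f (j - m) * fplus g m = 0 := by
      intro m
      rcases le_or_gt 0 m with h | h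
      · have hnl : ¬ (0 ≤ j - m) := by omega
        simp [fplus, hnl]
        exact fun _ h2 => absurd h2 (by omega)
      · simp [fplus, not_le.mpr h]
    simp only [zconv, hz, tsum_zero]
  constructor
  · intro n hn
    simp only [weyl]
    rw [if_pos hn, hfun, weylPlus_add4 hα _ _ _ _ hpp hpm hmp hmm n]
    have hD : weylPlus α (zconv (fminus f) (fminus g)) n = 0 :=
      weylPlus_zero_of hα _ hmm0 n hn
    have hB : weylPlus α (zconv (fplus f) (fminus g)) n
        = zconv (weylPlus α (fplus f)) (fminus g) n :=
      weylPlus_conv hα _ _ hfp hgm n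
    have hC : weylPlus α (zconv (fminus f) (fplus g)) n
        = zconv (fminus f) (weylPlus α (fplus g)) n := by
      rw [show zconv (fminus f) (fplus g) = zconv (fplus g) (fminus f) from
          funext fun x => zconv_comm _ _ x,
        weylPlus_conv hα _ _ hgp hfm n, zconv_comm]
    rw [hB, hC, hD]; ring
  · intro n hn
    simp only [weyl]
    rw [if_neg (not_le.mpr hn), hfun, weylMinus_add4 hα _ _ _ _ hpp hpm hmp hmm n]
    have hA : weylMinus α (zconv (fplus f) (fplus g)) n = 0 :=
      weylMinus_zero_of hα _ hpp0 n hn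
    have hB : weylMinus α (zconv (fplus f) (fminus g)) n
        = zconv (fplus f) (weylMinus α (fminus g)) n := by
      rw [show zconv (fplus f) (fminus g) = zconv (fminus g) (fplus f) from
          funext fun x => zconv_comm _ _ x,
        weylMinus_conv hα _ _ hgm hfp n, zconv_comm]
    have hC : weylMinus α (zconv (fminus f) (fplus g)) n
        = zconv (weylMinus α (fminus f)) (fplus g) n :=
      weylMinus_conv hα _ _ hfm hgp n
    rw [hA, hB, hC]; ring
end

section
/- For every finitely supported f : ℤ → ℂ, lim_{α → 0⁺} q_α(f) = ‖f‖_{ℓ¹(ℤ)} = ∑_{n∈ℤ} |f(n)|. -/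
open scoped BigOperators

/-- `q_α(f) = ∑_{n ∈ ℤ} k^{α+1}(|n|) |W^α f(n)|`. -/
noncomputable def qNorm (α : ℝ) (f : ℤ → ℂ) : ℝ :=
  ∑' n : ℤ, cesaroKernel (α + 1) n.natAbs * ‖weyl α f n‖

/-! ### Auxiliary lemmas -/

lemma cesaroKernel_one (m : ℕ) : cesaroKernel 1 m = 1 := by
  unfold cesaroKernel
  rw [div_eq_one_iff_eq (by positivity : ((Nat.factorial m : ℝ)) ≠ 0)]
  induction m with
  | zero => simp
  | succ k ih =>
      rw [Finset.prod_range_succ, ih, Nat.factorial_succ]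
      push_cast; ring

lemma cesaroKernel_continuous (m : ℕ) : Continuous fun α : ℝ => cesaroKernel α m := by
  unfold cesaroKernel
  exact (continuous_finset_prod _ fun i _ => continuous_id.add continuous_const).div_const _

lemma weylSumPlus_eq_sum (f : ℤ → ℂ) (hf : (Function.support f).Finite) (β : ℝ) (m : ℤ) :
    weylSumPlus β f m
      = ∑ j ∈ hf.toFinset, if m ≤ j then (cesaroKernel β (j - m).toNat : ℂ) * f j else 0 := by
  apply tsum_eq_sum
  intro b hb
  rw [Set.Finite.mem_toFinset] at hb
  have : f b = 0 := Function.notMem_support.mp hb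
  simp [this]

lemma weylSumMinus_eq_sum (f : ℤ → ℂ) (hf : (Function.support f).Finite) (β : ℝ) (m : ℤ) :
    weylSumMinus β f m
      = ∑ j ∈ hf.toFinset, if j ≤ m then (cesaroKernel β (m - j).toNat : ℂ) * f j else 0 := by
  apply tsum_eq_sum
  intro b hb
  rw [Set.Finite.mem_toFinset] at hb
  have : f b = 0 := Function.notMem_support.mp hb
  simp [this]

lemma weylSumPlus_vanish (f : ℤ → ℂ) (M : ℤ) (h : ∀ j, f j ≠ 0 → j ≤ M) {m : ℤ}
    (hm : M < m) (β : ℝ) : weylSumPlus β f m = 0 := by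
  have key : ∀ j : ℤ, (if m ≤ j then (cesaroKernel β (j - m).toNat : ℂ) * f j else 0) = 0 := by
    intro j
    by_cases hj : m ≤ j
    · by_cases hfj : f j = 0
      · simp [hj, hfj]
      · exact absurd (h j hfj) (by omega)
    · simp [hj]
  rw [weylSumPlus]
  calc (∑' j : ℤ, if m ≤ j then (cesaroKernel β (j - m).toNat : ℂ) * f j else 0)
      = ∑' _ : ℤ, (0 : ℂ) := tsum_congr key
    _ = 0 := tsum_zero

lemma weylSumMinus_vanish (f : ℤ → ℂ) (M : ℤ) (h : ∀ j, f j ≠ 0 → M ≤ j) {m : ℤ}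
    (hm : m < M) (β : ℝ) : weylSumMinus β f m = 0 := by
  have key : ∀ j : ℤ, (if j ≤ m then (cesaroKernel β (m - j).toNat : ℂ) * f j else 0) = 0 := by
    intro j
    by_cases hj : j ≤ m
    · by_cases hfj : f j = 0
      · simp [hj, hfj]
      · exact absurd (h j hfj) (by omega)
    · simp [hj]
  rw [weylSumMinus]
  calc (∑' j : ℤ, if j ≤ m then (cesaroKernel β (m - j).toNat : ℂ) * f j else 0)
      = ∑' _ : ℤ, (0 : ℂ) := tsum_congr key
    _ = 0 := tsum_zero

lemma weylPlus_eq_s10 (f : ℤ → ℂ) {α : ℝ} (h0 : 0 < α) (h1 : α < 1) (n : ℤ) :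
    weylPlus α f n = weylSumPlus (1 - α) f n - weylSumPlus (1 - α) f (n + 1) := by
  have hfl : ⌊α⌋₊ = 0 := Nat.floor_eq_zero.mpr h1
  rw [weylPlus, if_neg (not_le.mpr h0), hfl]
  rw [Finset.sum_range_succ, Finset.sum_range_succ, Finset.sum_range_zero]
  norm_num
  ring

lemma weylMinus_eq_s10 (f : ℤ → ℂ) {α : ℝ} (h0 : 0 < α) (h1 : α < 1) (n : ℤ) :
    weylMinus α f n = weylSumMinus (1 - α) f n - weylSumMinus (1 - α) f (n - 1) := by
  have hfl : ⌊α⌋₊ = 0 := Nat.floor_eq_zero.mpr h1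
  rw [weylMinus, if_neg (not_le.mpr h0), hfl]
  rw [Finset.sum_range_succ, Finset.sum_range_succ, Finset.sum_range_zero]
  norm_num
  ring

lemma kernC_continuous (k : ℕ) :
    Continuous fun α : ℝ => ((cesaroKernel (1 - α) k : ℝ) : ℂ) :=
  Complex.continuous_ofReal.comp
    ((cesaroKernel_continuous k).comp (continuous_const.sub continuous_id))

lemma sum_plus_cont (f : ℤ → ℂ) (S : Finset ℤ) (m : ℤ) :
    Continuous fun α : ℝ =>
      ∑ j ∈ S, if m ≤ j then ((cesaroKernel (1 - α) (j - m).toNat : ℝ) : ℂ) * f j else 0 := by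
  apply continuous_finset_sum
  intro j _
  split_ifs
  · exact (kernC_continuous _).mul continuous_const
  · exact continuous_const

lemma sum_minus_cont (f : ℤ → ℂ) (S : Finset ℤ) (m : ℤ) :
    Continuous fun α : ℝ =>
      ∑ j ∈ S, if j ≤ m then ((cesaroKernel (1 - α) (m - j).toNat : ℝ) : ℂ) * f j else 0 := by
  apply continuous_finset_sum
  intro j _
  split_ifs
  · exact (kernC_continuous _).mul continuous_const
  · exact continuous_const

lemma diff_plus (f : ℤ → ℂ) (hf : (Function.support f).Finite) (n : ℤ) :
    ((∑ j ∈ hf.toFinset, if n ≤ j then f j else 0)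
      - ∑ j ∈ hf.toFinset, if n + 1 ≤ j then f j else 0) = f n := by
  rw [← Finset.sum_sub_distrib]
  have h1 : ∀ j ∈ hf.toFinset,
      ((if n ≤ j then f j else 0) - (if n + 1 ≤ j then f j else 0))
        = if j = n then f j else 0 := by
    intro j _
    split_ifs <;> first | ring1 | (exfalso; omega)
  rw [Finset.sum_congr rfl h1, Finset.sum_ite_eq']
  split_ifs with h
  · rfl
  · rw [Set.Finite.mem_toFinset] at h
    exact (Function.notMem_support.mp h).symm

lemma diff_minus (f : ℤ → ℂ) (hf : (Function.support f).Finite) (n : ℤ) :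
    ((∑ j ∈ hf.toFinset, if j ≤ n then f j else 0)
      - ∑ j ∈ hf.toFinset, if j ≤ n - 1 then f j else 0) = f n := by
  rw [← Finset.sum_sub_distrib]
  have h1 : ∀ j ∈ hf.toFinset,
      ((if j ≤ n then f j else 0) - (if j ≤ n - 1 then f j else 0))
        = if j = n then f j else 0 := by
    intro j _
    split_ifs <;> first | ring1 | (exfalso; omega)
  rw [Finset.sum_congr rfl h1, Finset.sum_ite_eq']
  split_ifs with h
  · rfl
  · rw [Set.Finite.mem_toFinset] at h
    exact (Function.notMem_support.mp h).symm

lemma term_tendsto (f : ℤ → ℂ) (hf : (Function.support f).Finite) (n : ℤ) :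
    Filter.Tendsto (fun α : ℝ => cesaroKernel (α + 1) n.natAbs * ‖weyl α f n‖)
      (nhdsWithin 0 (Set.Ioi 0)) (nhds (‖f n‖)) := by
  have hmem : (0 : ℝ) ∈ Set.Ico (0 : ℝ) 1 := ⟨le_refl 0, one_pos⟩
  rcases le_or_gt 0 n with hn | hn
  · set A : ℝ → ℂ := fun α =>
      ∑ j ∈ hf.toFinset, if n ≤ j then ((cesaroKernel (1 - α) (j - n).toNat : ℝ) : ℂ) * f j else 0
      with hA
    set B : ℝ → ℂ := fun α =>
      ∑ j ∈ hf.toFinset,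
        if n + 1 ≤ j then ((cesaroKernel (1 - α) (j - (n + 1)).toNat : ℝ) : ℂ) * f j else 0
      with hB
    have hg : Continuous fun α : ℝ => cesaroKernel (α + 1) n.natAbs * ‖A α - B α‖ :=
      ((cesaroKernel_continuous _).comp (continuous_id.add continuous_const)).mul
        (continuous_norm.comp ((sum_plus_cont f _ n).sub (sum_plus_cont f _ (n + 1))))
    have h0 : cesaroKernel (0 + 1) n.natAbs * ‖A 0 - B 0‖ = ‖f n‖ := by
      have hA0 : A 0 = ∑ j ∈ hf.toFinset, if n ≤ j then f j else 0 := by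
        rw [hA]
        refine Finset.sum_congr rfl fun j _ => ?_
        split_ifs
        · norm_num [cesaroKernel_one]
        · rfl
      have hB0 : B 0 = ∑ j ∈ hf.toFinset, if n + 1 ≤ j then f j else 0 := by
        rw [hB]
        refine Finset.sum_congr rfl fun j _ => ?_
        split_ifs
        · norm_num [cesaroKernel_one]
        · rfl
      rw [hA0, hB0, diff_plus f hf n]
      norm_num [cesaroKernel_one]
    have htd : Filter.Tendsto
        (fun α : ℝ => cesaroKernel (α + 1) n.natAbs * ‖A α - B α‖)
        (nhdsWithin 0 (Set.Ioi 0)) (nhds (‖f n‖)) :=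
      h0 ▸ ((hg.tendsto 0).mono_left nhdsWithin_le_nhds)
    refine Filter.Tendsto.congr' ?_ htd
    filter_upwards [Ioo_mem_nhdsGT_of_mem hmem] with α hα
    rw [weyl, if_pos hn, weylPlus_eq_s10 f hα.1 hα.2, weylSumPlus_eq_sum f hf,
      weylSumPlus_eq_sum f hf]
  · set A : ℝ → ℂ := fun α =>
      ∑ j ∈ hf.toFinset, if j ≤ n then ((cesaroKernel (1 - α) (n - j).toNat : ℝ) : ℂ) * f j else 0
      with hA
    set B : ℝ → ℂ := fun α =>
      ∑ j ∈ hf.toFinset,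
        if j ≤ n - 1 then ((cesaroKernel (1 - α) ((n - 1) - j).toNat : ℝ) : ℂ) * f j else 0
      with hB
    have hg : Continuous fun α : ℝ => cesaroKernel (α + 1) n.natAbs * ‖A α - B α‖ :=
      ((cesaroKernel_continuous _).comp (continuous_id.add continuous_const)).mul
        (continuous_norm.comp ((sum_minus_cont f _ n).sub (sum_minus_cont f _ (n - 1))))
    have h0 : cesaroKernel (0 + 1) n.natAbs * ‖A 0 - B 0‖ = ‖f n‖ := by
      have hA0 : A 0 = ∑ j ∈ hf.toFinset, if j ≤ n then f j else 0 := by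
        rw [hA]
        refine Finset.sum_congr rfl fun j _ => ?_
        split_ifs
        · norm_num [cesaroKernel_one]
        · rfl
      have hB0 : B 0 = ∑ j ∈ hf.toFinset, if j ≤ n - 1 then f j else 0 := by
        rw [hB]
        refine Finset.sum_congr rfl fun j _ => ?_
        split_ifs
        · norm_num [cesaroKernel_one]
        · rfl
      rw [hA0, hB0, diff_minus f hf n]
      norm_num [cesaroKernel_one]
    have htd : Filter.Tendsto
        (fun α : ℝ => cesaroKernel (α + 1) n.natAbs * ‖A α - B α‖)
        (nhdsWithin 0 (Set.Ioi 0)) (nhds (‖f n‖)) :=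
      h0 ▸ ((hg.tendsto 0).mono_left nhdsWithin_le_nhds)
    refine Filter.Tendsto.congr' ?_ htd
    filter_upwards [Ioo_mem_nhdsGT_of_mem hmem] with α hα
    rw [weyl, if_neg (not_le.mpr hn), weylMinus_eq_s10 f hα.1 hα.2, weylSumMinus_eq_sum f hf,
      weylSumMinus_eq_sum f hf]

/-- For finitely supported `f : ℤ → ℂ`,
`lim_{α → 0⁺} q_α(f) = ‖f‖_{ℓ¹(ℤ)} = ∑_{n ∈ ℤ} |f(n)|`. -/
theorem qNorm_tendsto_l1
    (f : ℤ → ℂ) (hf : (Function.support f).Finite) :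
    Filter.Tendsto (fun α : ℝ => qNorm α f) (nhdsWithin 0 (Set.Ioi 0))
      (nhds (∑' n : ℤ, ‖f n‖)) := by
  classical
  set N : ℕ := hf.toFinset.sup Int.natAbs with hN
  have habs : ∀ j, f j ≠ 0 → j.natAbs ≤ N := fun j h =>
    Finset.le_sup (hf.mem_toFinset.mpr h)
  have hub : ∀ j, f j ≠ 0 → j ≤ (N : ℤ) := fun j h => by
    have := habs j h; omega
  have hlb : ∀ j, f j ≠ 0 → -(N : ℤ) ≤ j := fun j h => by
    have := habs j h; omega
  set T : Finset ℤ := Finset.Icc (-(N : ℤ)) (N : ℤ) with hT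
  have hfT : ∀ n, n ∉ T → f n = 0 := by
    intro n hn
    by_contra h
    exact hn (Finset.mem_Icc.mpr ⟨hlb n h, hub n h⟩)
  have hC : (∑' n : ℤ, ‖f n‖) = ∑ n ∈ T, ‖f n‖ :=
    tsum_eq_sum (fun n hn => by rw [hfT n hn]; simp)
  have hWz : ∀ α : ℝ, 0 < α → ∀ n ∉ T, weyl α f n = 0 := by
    intro α hα n hn
    rw [hT, Finset.mem_Icc] at hn
    push_neg at hn
    rcases lt_or_ge ((N : ℤ)) n with h | h
    · rw [weyl, if_pos (by omega : (0 : ℤ) ≤ n), weylPlus, if_neg (not_le.mpr hα)]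
      refine Finset.sum_eq_zero fun j _ => ?_
      rw [weylSumPlus_vanish f (N : ℤ) hub (by omega : (N : ℤ) < n + (j : ℤ)), mul_zero]
    · have h2 : n < -(N : ℤ) := by omega
      rw [weyl, if_neg (by omega : ¬ (0 : ℤ) ≤ n), weylMinus, if_neg (not_le.mpr hα)]
      refine Finset.sum_eq_zero fun j _ => ?_
      rw [weylSumMinus_vanish f (-(N : ℤ)) hlb (by omega : n - (j : ℤ) < -(N : ℤ)), mul_zero]
  have hq : ∀ α : ℝ, 0 < α →
      qNorm α f = ∑ n ∈ T, cesaroKernel (α + 1) n.natAbs * ‖weyl α f n‖ := by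
    intro α hα
    unfold qNorm
    exact tsum_eq_sum (fun n hn => by rw [hWz α hα n hn]; simp)
  rw [hC]
  have hlim : Filter.Tendsto
      (fun α : ℝ => ∑ n ∈ T, cesaroKernel (α + 1) n.natAbs * ‖weyl α f n‖)
      (nhdsWithin 0 (Set.Ioi 0)) (nhds (∑ n ∈ T, ‖f n‖)) :=
    tendsto_finset_sum _ (fun n _ => term_tendsto f hf n)
  refine Filter.Tendsto.congr' ?_ hlim
  filter_upwards [self_mem_nhdsWithin] with α hα
  exact (hq α hα).symm
end
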